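/- Every globally defined trajectory of P starting in the simplex with product strictly between 0 and 1/27 is periodic: if γ : ℝ → ℝ³ is differentiable with γ'(t) = P(γ(t)) for all t ∈ ℝ, γ(0) ∈ Δ², and γ₁(0)·γ₂(0)·γ₃(0) ∈ (0, 1/27), then γ(t) ∈ Δ² for all t and there exists T > 0 such that γ(t + T) = γ(t) for all t ∈ ℝ. -/

import Mathlib

open Filter Set Topology

noncomputable section

/-- The rock–paper–scissors vector field `P` on `ℝ³`, with components
`P₁(x,y,z) = x(z-y)/2`, `P₂(x,y,z) = y(x-z)/2`, `P₃(x,y,z) = z(y-x)/2`. -/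
def Pfield : ℝ × ℝ × ℝ → ℝ × ℝ × ℝ :=
  fun p => (p.1 * (p.2.2 - p.2.1) / 2, p.2.1 * (p.1 - p.2.2) / 2, p.2.2 * (p.2.1 - p.1) / 2)

/-- The simplex `Δ² = {(x,y,z) : x,y,z ≥ 0, x+y+z = 1}`. -/
def simplex2 : Set (ℝ × ℝ × ℝ) :=
  {p | 0 ≤ p.1 ∧ 0 ≤ p.2.1 ∧ 0 ≤ p.2.2 ∧ p.1 + p.2.1 + p.2.2 = 1}

/-!
Along a trajectory the sum `x + y + z` and the product `xyz` are conserved, so the coordinates stay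
positive and the trajectory runs in the simplex along the level curve `xyz = c`. In the coordinate
`ζ = (x - 1/3) + (y - 1/3) i` centred at the centroid, the angular velocity `Im (ζ' / ζ)` equals
`(xy + yz + zx - 9xyz) / (6 |ζ|²)`, which is at least `(√(3c) - 9c) / 6 > 0` because
`(xy + yz + zx)² ≥ 3xyz`. Hence the argument of `ζ` gains `2π` within finite time `T`, when
`ζ T = r ζ 0` with `r > 0`. By weighted AM-GM, a homothety of ratio `r ≠ 1` about the centroid
changes the product of a point whose product is below `1/27`, so `r = 1` and `γ T = γ 0`;
uniqueness for the locally Lipschitz field `P` then makes `γ` periodic with period `T`.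
-/

lemma eq_of_forall_hasDerivAt_zero {E : Type*} [NormedAddCommGroup E] [NormedSpace ℝ E]
    {f : ℝ → E} (hf : ∀ t, HasDerivAt f 0 t) (s t : ℝ) : f s = f t :=
  is_const_of_deriv_eq_zero (fun t => (hf t).differentiableAt) (fun t => (hf t).deriv) s t

lemma pos_of_continuous_of_ne_zero {f : ℝ → ℝ} (hf : Continuous f) (hne : ∀ t, f t ≠ 0)
    (h0 : 0 < f 0) (t : ℝ) : 0 < f t := by
  by_contra! ht
  obtain ⟨s, hs⟩ := intermediate_value_univ t 0 hf ⟨ht, h0.le⟩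
  exact hne s hs

lemma HasDerivAt.coords {γ : ℝ → ℝ × ℝ × ℝ} {v : ℝ × ℝ × ℝ} {t : ℝ} (h : HasDerivAt γ v t) :
    HasDerivAt (fun s => (γ s).1) v.1 t ∧ HasDerivAt (fun s => (γ s).2.1) v.2.1 t ∧
      HasDerivAt (fun s => (γ s).2.2) v.2.2 t := by
  have h₂ : HasDerivAt (fun s => (γ s).2) v.2 t := hasFDerivAt_snd.comp_hasDerivAt (f := γ) t h
  exact ⟨hasFDerivAt_fst.comp_hasDerivAt (f := γ) t h,
    hasFDerivAt_fst.comp_hasDerivAt (f := fun s => (γ s).2) t h₂,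
    hasFDerivAt_snd.comp_hasDerivAt (f := fun s => (γ s).2) t h₂⟩

theorem Function.Periodic.of_hasDerivAt_of_eq {E : Type*} [NormedAddCommGroup E] [NormedSpace ℝ E]
    {v : E → E} {s : Set E} (hs : IsCompact s) (hv : LocallyLipschitzOn s v) {γ : ℝ → E}
    (hγ : ∀ t, HasDerivAt γ (v (γ t)) t) (hγs : ∀ t, γ t ∈ s) {T : ℝ} (hT : γ T = γ 0) :
    Function.Periodic γ T := by
  obtain ⟨K, hK⟩ := hv.exists_lipschitzOnWith_of_compact hs
  have := ODE_solution_unique_univ (v := fun _ => v) (s := fun _ => s) (t₀ := 0)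
    (f := fun t => γ (t + T)) (g := γ) (fun _ => hK)
    (fun t => ⟨(hγ (t + T)).comp_add_const t T, hγs _⟩) (fun t => ⟨hγ t, hγs t⟩)
    (by simpa using hT)
  exact congrFun this

lemma rpow_mul_rpow_le_homothety {x s : ℝ} (hx : 0 ≤ x) (hs₀ : 0 ≤ s) (hs₁ : s ≤ 1) :
    (1 / 3 : ℝ) ^ (1 - s) * x ^ s ≤ 1 / 3 + s * (x - 1 / 3) := by
  have := Real.geom_mean_le_arith_mean2_weighted (p₁ := 1 / 3) (sub_nonneg.2 hs₁) hs₀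
    (by norm_num) hx (sub_add_cancel 1 s)
  linarith

lemma mul_mul_lt_homothety {x y z s : ℝ} (hx : 0 < x) (hy : 0 < y) (hz : 0 < z)
    (hs₀ : 0 < s) (hs₁ : s < 1) (h : x * y * z < 1 / 27) :
    x * y * z <
      (1 / 3 + s * (x - 1 / 3)) * (1 / 3 + s * (y - 1 / 3)) * (1 / 3 + s * (z - 1 / 3)) := by
  have hP : 0 < x * y * z := by positivity
  calc x * y * z = (x * y * z) ^ (1 - s) * (x * y * z) ^ s := by
        rw [← Real.rpow_add hP, sub_add_cancel, Real.rpow_one]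
    _ < (1 / 27) ^ (1 - s) * (x * y * z) ^ s := by gcongr
    _ = (1 / 3) ^ (1 - s) * x ^ s * ((1 / 3) ^ (1 - s) * y ^ s) * ((1 / 3) ^ (1 - s) * z ^ s) := by
        rw [Real.mul_rpow (by positivity) hz.le, Real.mul_rpow hx.le hy.le,
          show (1 / 27 : ℝ) = 1 / 3 * (1 / 3) * (1 / 3) by norm_num,
          Real.mul_rpow (by norm_num) (by norm_num), Real.mul_rpow (by norm_num) (by norm_num)]
        ring
    _ ≤ _ := by
        have hx' := rpow_mul_rpow_le_homothety hx.le hs₀.le hs₁.le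
        have hy' := rpow_mul_rpow_le_homothety hy.le hs₀.le hs₁.le
        have hz' := rpow_mul_rpow_le_homothety hz.le hs₀.le hs₁.le
        exact mul_le_mul (mul_le_mul hx' hy' (by positivity) (le_trans (by positivity) hx')) hz'
          (by positivity) (mul_nonneg (le_trans (by positivity) hx') (le_trans (by positivity) hy'))

lemma eq_one_of_homothety_mul_mul_eq {x y z r : ℝ} (hx : 0 < x) (hy : 0 < y) (hz : 0 < z)
    (hx' : 0 < 1 / 3 + r * (x - 1 / 3)) (hy' : 0 < 1 / 3 + r * (y - 1 / 3))
    (hz' : 0 < 1 / 3 + r * (z - 1 / 3)) (hr : 0 < r) (h : x * y * z < 1 / 27)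
    (heq : (1 / 3 + r * (x - 1 / 3)) * (1 / 3 + r * (y - 1 / 3)) * (1 / 3 + r * (z - 1 / 3)) =
      x * y * z) : r = 1 := by
  rcases lt_trichotomy r 1 with hr₁ | rfl | hr₁
  · exact absurd heq (mul_mul_lt_homothety hx hy hz hr hr₁ h).ne'
  · rfl
  · have key := mul_mul_lt_homothety hx' hy' hz' (inv_pos.2 hr) (inv_lt_one_of_one_lt₀ hr₁)
      (heq ▸ h)
    have inv : ∀ a : ℝ, 1 / 3 + r⁻¹ * (1 / 3 + r * (a - 1 / 3) - 1 / 3) = a := fun a => by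
      field_simp
      ring
    rw [inv, inv, inv] at key
    exact absurd heq key.ne

lemma sqrt_three_mul_le {x y z : ℝ} (hx : 0 ≤ x) (hy : 0 ≤ y) (hz : 0 ≤ z) (h : x + y + z = 1) :
    √(3 * (x * y * z)) ≤ x * y + y * z + z * x := by
  rw [Real.sqrt_le_left (by positivity)]
  nlinarith [sq_nonneg (x * y - y * z), sq_nonneg (y * z - z * x), sq_nonneg (z * x - x * y)]

lemma nine_mul_lt_sqrt_three_mul {c : ℝ} (h₀ : 0 < c) (h₁ : c < 1 / 27) : 9 * c < √(3 * c) := by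
  rw [Real.lt_sqrt (by positivity)]
  nlinarith

open Complex

lemma eq_mul_exp_sub_of_hasDerivAt_div {ζ ζ' F : ℝ → ℂ} (hζ : ∀ t, HasDerivAt ζ (ζ' t) t)
    (hF : ∀ t, HasDerivAt F (ζ' t / ζ t) t) (hne : ∀ t, ζ t ≠ 0) (t : ℝ) :
    ζ t = ζ 0 * exp (F t - F 0) := by
  have hconst : ∀ s, HasDerivAt (fun s => ζ s * exp (-F s)) 0 s := fun s => by
    refine ((hζ s).mul (hF s).neg.cexp).congr_deriv ?_
    field_simp [hne s]
    ring
  calc ζ t = ζ t * exp (-F t) * exp (F t) := by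
        rw [mul_assoc, ← exp_add, neg_add_cancel, exp_zero, mul_one]
    _ = ζ 0 * exp (-F 0) * exp (F t) := by rw [eq_of_forall_hasDerivAt_zero hconst t 0]
    _ = ζ 0 * exp (F t - F 0) := by rw [mul_assoc, ← exp_add, neg_add_eq_sub]

lemma exists_pos_eq_ofReal_mul_of_le_im_div {ζ ζ' : ℝ → ℂ} (hζ : ∀ t, HasDerivAt ζ (ζ' t) t)
    (hζ' : Continuous ζ') {ω : ℝ} (hω : 0 < ω) (hrot : ∀ t, ω ≤ (ζ' t / ζ t).im) :
    ∃ T > 0, ∃ r : ℝ, 0 < r ∧ ζ T = r * ζ 0 := by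
  -- `x / 0 = 0` in Lean, so `hrot` rules out zeros of `ζ`.
  have hne : ∀ t, ζ t ≠ 0 := fun t h => by
    have := hrot t
    simp only [h, div_zero, zero_im] at this
    linarith
  set F : ℝ → ℂ := fun t => ∫ s in (0 : ℝ)..t, ζ' s / ζ s
  have hF : ∀ t, HasDerivAt F (ζ' t / ζ t) t := fun t =>
    ((hζ'.div (continuous_iff_continuousAt.2 fun t => (hζ t).continuousAt) hne
      ).integral_hasStrictDerivAt 0 t).hasDerivAt
  set θ : ℝ → ℝ := fun t => (F t).im
  have hθ : ∀ t, HasDerivAt θ (ζ' t / ζ t).im t := fun t =>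
    imCLM.hasFDerivAt.comp_hasDerivAt t (hF t)
  have hθ_diff : Differentiable ℝ θ := fun t => (hθ t).differentiableAt
  have hgrow := mul_sub_le_image_sub_of_le_deriv hθ_diff (fun t => (hθ t).deriv ▸ hrot t)
    (le_of_lt (div_pos Real.two_pi_pos hω) : 0 ≤ 2 * Real.pi / ω)
  obtain ⟨T, hT, hθT⟩ : ∃ T ∈ Icc 0 (2 * Real.pi / ω), θ T = θ 0 + 2 * Real.pi := by
    refine intermediate_value_Icc (div_pos Real.two_pi_pos hω).le hθ_diff.continuous.continuousOn
      ⟨by linarith [Real.pi_pos], ?_⟩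
    rw [sub_zero, mul_div_cancel₀ _ hω.ne'] at hgrow
    linarith
  refine ⟨T, hT.1.lt_of_ne ?_, Real.exp (F T - F 0).re, Real.exp_pos _, ?_⟩
  · rintro rfl
    linarith [Real.pi_pos]
  rw [eq_mul_exp_sub_of_hasDerivAt_div hζ hF hne T, exp_eq_exp_re_mul_sin_add_cos,
    show (F T - F 0).im = 2 * Real.pi by simp only [sub_im]; linarith]
  simp only [ofReal_mul, ofReal_ofNat, cos_two_pi, sin_two_pi, ofReal_exp]
  ring

/-- `p ↦ planeCoord (p - centroid)` is an affine chart of the plane `x + y + z = 1` sending the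
centroid to `0`. -/
def planeCoord (p : ℝ × ℝ × ℝ) : ℂ := p.1 + p.2.1 * I

def centroid : ℝ × ℝ × ℝ := (1 / 3, 1 / 3, 1 / 3)

lemma HasDerivAt.planeCoord {γ : ℝ → ℝ × ℝ × ℝ} {v : ℝ × ℝ × ℝ} {t : ℝ}
    (h : HasDerivAt γ v t) : HasDerivAt (fun s => planeCoord (γ s)) (planeCoord v) t := by
  obtain ⟨hx, hy, -⟩ := h.coords
  exact hx.ofReal_comp.add (hy.ofReal_comp.mul_const I)

lemma continuous_planeCoord : Continuous planeCoord := by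
  unfold planeCoord; fun_prop

lemma planeCoord_div_im (q w : ℝ × ℝ × ℝ) :
    (planeCoord q / planeCoord w).im = (w.1 * q.2.1 - w.2.1 * q.1) / (w.1 ^ 2 + w.2.1 ^ 2) := by
  simp only [planeCoord, div_im, add_im, ofReal_im, mul_im, ofReal_re, I_im, mul_one, I_re,
    mul_zero, add_zero, zero_add, add_re, mul_re, sub_self, normSq_apply]
  ring

lemma eq_of_planeCoord_sub_centroid_eq_mul {p q : ℝ × ℝ × ℝ}
    (hp : 0 < p.1 ∧ 0 < p.2.1 ∧ 0 < p.2.2) (hq : 0 < q.1 ∧ 0 < q.2.1 ∧ 0 < q.2.2)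
    (hp₁ : p.1 + p.2.1 + p.2.2 = 1) (hq₁ : q.1 + q.2.1 + q.2.2 = 1)
    (hprod : q.1 * q.2.1 * q.2.2 = p.1 * p.2.1 * p.2.2) (hlt : p.1 * p.2.1 * p.2.2 < 1 / 27)
    {r : ℝ} (hr : 0 < r) (h : planeCoord (q - centroid) = r * planeCoord (p - centroid)) :
    q = p := by
  obtain ⟨x, y, z⟩ := p
  obtain ⟨x', y', z'⟩ := q
  have hx := congrArg re h
  have hy := congrArg im h
  simp only [planeCoord, centroid, Prod.fst_sub, Prod.snd_sub, add_re, add_im, mul_re, mul_im,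
    ofReal_re, ofReal_im, I_re, I_im] at hx hy
  dsimp only at *
  obtain rfl : x' = 1 / 3 + r * (x - 1 / 3) := by linarith
  obtain rfl : y' = 1 / 3 + r * (y - 1 / 3) := by linarith
  obtain rfl : z' = 1 / 3 + r * (z - 1 / 3) := by linear_combination hq₁ - r * hp₁
  obtain rfl : r = 1 := eq_one_of_homothety_mul_mul_eq hp.1 hp.2.1 hp.2.2 hq.1 hq.2.1 hq.2.2 hr
    hlt hprod
  simp

lemma simplex2_isCompact : IsCompact simplex2 := by
  have hclosed : IsClosed simplex2 := by
    simp only [simplex2, ofPred_and]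
    refine .inter (isClosed_le ?_ ?_) (.inter (isClosed_le ?_ ?_) (.inter (isClosed_le ?_ ?_)
      (isClosed_eq ?_ ?_))) <;> fun_prop
  refine (isCompact_Icc (a := (0, 0, 0)) (b := (1, 1, 1))).of_isClosed_subset hclosed ?_
  rintro ⟨x, y, z⟩ ⟨hx, hy, hz, hs⟩
  dsimp only at hx hy hz hs
  exact ⟨⟨hx, hy, hz⟩, by linarith, by linarith, by linarith⟩

lemma Pfield_locallyLipschitz : LocallyLipschitz Pfield :=
  ContDiff.locallyLipschitz (𝕂 := ℝ) (by unfold Pfield; fun_prop)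

section Trajectory

variable {γ : ℝ → ℝ × ℝ × ℝ}

lemma rps_sum_eq (hγ : ∀ t, HasDerivAt γ (Pfield (γ t)) t) (t : ℝ) :
    (γ t).1 + (γ t).2.1 + (γ t).2.2 = (γ 0).1 + (γ 0).2.1 + (γ 0).2.2 := by
  refine eq_of_forall_hasDerivAt_zero
    (f := fun t => (γ t).1 + (γ t).2.1 + (γ t).2.2) (fun s => ?_) t 0
  obtain ⟨hx, hy, hz⟩ := (hγ s).coords
  exact ((hx.add hy).add hz).congr_deriv (by simp only [Pfield]; ring)

lemma rps_prod_eq (hγ : ∀ t, HasDerivAt γ (Pfield (γ t)) t) (t : ℝ) :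
    (γ t).1 * (γ t).2.1 * (γ t).2.2 = (γ 0).1 * (γ 0).2.1 * (γ 0).2.2 := by
  refine eq_of_forall_hasDerivAt_zero
    (f := fun t => (γ t).1 * (γ t).2.1 * (γ t).2.2) (fun s => ?_) t 0
  obtain ⟨hx, hy, hz⟩ := (hγ s).coords
  exact ((hx.mul hy).mul hz).congr_deriv (by simp only [Pfield, Pi.mul_apply]; ring)

lemma rps_coords_pos (hγ : ∀ t, HasDerivAt γ (Pfield (γ t)) t) (h0 : γ 0 ∈ simplex2)
    (hprod : 0 < (γ 0).1 * (γ 0).2.1 * (γ 0).2.2) (t : ℝ) :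
    0 < (γ t).1 ∧ 0 < (γ t).2.1 ∧ 0 < (γ t).2.2 := by
  have hne : ∀ t, (γ t).1 ≠ 0 ∧ (γ t).2.1 ≠ 0 ∧ (γ t).2.2 ≠ 0 := fun t => by
    have := hprod.ne'
    rw [← rps_prod_eq hγ t] at this
    simpa only [ne_eq, mul_eq_zero, not_or, and_assoc] using this
  have hcont : Continuous γ := continuous_iff_continuousAt.2 fun t => (hγ t).continuousAt
  obtain ⟨hx, hy, hz, -⟩ := h0
  exact ⟨pos_of_continuous_of_ne_zero (by fun_prop) (fun t => (hne t).1)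
      (hx.lt_of_ne' (hne 0).1) t,
    pos_of_continuous_of_ne_zero (by fun_prop) (fun t => (hne t).2.1)
      (hy.lt_of_ne' (hne 0).2.1) t,
    pos_of_continuous_of_ne_zero (by fun_prop) (fun t => (hne t).2.2)
      (hz.lt_of_ne' (hne 0).2.2) t⟩

end Trajectory

lemma rps_rotation_speed {p : ℝ × ℝ × ℝ} (hx : 0 < p.1) (hy : 0 < p.2.1) (hz : 0 < p.2.2)
    (hsum : p.1 + p.2.1 + p.2.2 = 1) (hlt : p.1 * p.2.1 * p.2.2 < 1 / 27) :
    (√(3 * (p.1 * p.2.1 * p.2.2)) - 9 * (p.1 * p.2.1 * p.2.2)) / 6 ≤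
      (planeCoord (Pfield p) / planeCoord (p - centroid)).im := by
  obtain ⟨x, y, z⟩ := p
  dsimp only at *
  rw [planeCoord_div_im]
  simp only [Pfield, centroid, Prod.fst_sub, Prod.snd_sub]
  have hnum : (x - 1 / 3) * (y * (x - z) / 2) - (y - 1 / 3) * (x * (z - y) / 2) =
      (x * y + y * z + z * x - 9 * (x * y * z)) / 6 := by
    linear_combination (x * y / 2) * hsum
  have hden : (x - 1 / 3) ^ 2 + (y - 1 / 3) ^ 2 ≤ 1 := by nlinarith
  have hden₀ : 0 < (x - 1 / 3) ^ 2 + (y - 1 / 3) ^ 2 := by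
    by_contra! h
    obtain rfl : x = 1 / 3 := by nlinarith
    obtain rfl : y = 1 / 3 := by nlinarith
    obtain rfl : z = 1 / 3 := by linarith
    norm_num at hlt
  rw [hnum]
  have := sqrt_three_mul_le hx.le hy.le hz.le hsum
  have := nine_mul_lt_sqrt_three_mul (by positivity) hlt
  exact (by linarith : _ ≤ _).trans (le_div_self (by linarith) hden₀ hden)

/-- Every globally defined trajectory of `P` starting in the simplex with product strictly
between `0` and `1/27` stays in the simplex and is periodic. -/
theorem rps_trajectories_periodic (γ : ℝ → ℝ × ℝ × ℝ)
    (hderiv : ∀ t : ℝ, HasDerivAt γ (Pfield (γ t)) t)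
    (h0 : γ 0 ∈ simplex2)
    (hM : (γ 0).1 * (γ 0).2.1 * (γ 0).2.2 ∈ Set.Ioo (0 : ℝ) (1/27)) :
    (∀ t : ℝ, γ t ∈ simplex2) ∧ ∃ T : ℝ, 0 < T ∧ ∀ t : ℝ, γ (t + T) = γ t := by
  have hpos := rps_coords_pos hderiv h0 hM.1
  have hsum t : (γ t).1 + (γ t).2.1 + (γ t).2.2 = 1 := (rps_sum_eq hderiv t).trans h0.2.2.2
  have hmem t : γ t ∈ simplex2 := ⟨(hpos t).1.le, (hpos t).2.1.le, (hpos t).2.2.le, hsum t⟩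
  have hrot t := rps_rotation_speed (hpos t).1 (hpos t).2.1 (hpos t).2.2 (hsum t)
    ((rps_prod_eq hderiv t).trans_lt hM.2)
  simp only [rps_prod_eq hderiv] at hrot
  have hcont : Continuous γ := continuous_iff_continuousAt.2 fun t => (hderiv t).continuousAt
  obtain ⟨T, hT, r, hr, hζT⟩ := exists_pos_eq_ofReal_mul_of_le_im_div
    (fun t => ((hderiv t).sub_const centroid).planeCoord)
    (continuous_planeCoord.comp (Pfield_locallyLipschitz.continuous.comp hcont))
    (by linarith [nine_mul_lt_sqrt_three_mul hM.1 hM.2]) hrot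
  have hret : γ T = γ 0 := eq_of_planeCoord_sub_centroid_eq_mul (hpos 0) (hpos T) (hsum 0)
    (hsum T) (rps_prod_eq hderiv T) hM.2 hr hζT
  exact ⟨hmem, T, hT, Function.Periodic.of_hasDerivAt_of_eq simplex2_isCompact
    Pfield_locallyLipschitz.locallyLipschitzOn hderiv hmem hret⟩
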